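/- Let P be symmetric positive definite of size n, A_K ∈ ℝ^{n×n}, E ∈ ℝ^{n×1}, C ∈ ℝ^{1×n}. If the (n+1)×(n+1) matrix [[P − A_KᵀPA_K, −A_KᵀPE − ½Cᵀ],[−EᵀPA_K − ½C, 1 − EᵀPE]] is positive definite, then for every function φ: ℝ → ℝ satisfying φ(y)(φ(y) − y) ≤ 0 for all y, and every nonzero x ∈ ℝ^n, one has (A_Kx + Eφ(Cx))ᵀP(A_Kx + Eφ(Cx)) < xᵀPx. -/

import Mathlib

/-!
Evaluate the quadratic form of the LMI matrix at `(x, u)` with `u = φ(Cx)`: it equals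
`V(x) - V(A x + E u) + u ⬝ u - u ⬝ Cx` (an S-procedure with multiplier `1`). The last two terms
are `∑ φ(yᵢ)(φ(yᵢ) - yᵢ) ≤ 0` by the sector condition, and the form is positive because
`(x, u) ≠ 0`, so `V` strictly decreases along the closed loop.
-/

open Matrix

section

variable {m k : Type*} [Fintype m] [Fintype k]

theorem Matrix.sumElim_dotProduct_fromBlocks_mulVec (A : Matrix m m ℝ) (B : Matrix m k ℝ)
    (C : Matrix k m ℝ) (D : Matrix k k ℝ) (x : m → ℝ) (u : k → ℝ) :
    Sum.elim x u ⬝ᵥ (fromBlocks A B C D *ᵥ Sum.elim x u) =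
      x ⬝ᵥ (A *ᵥ x) + x ⬝ᵥ (B *ᵥ u) + u ⬝ᵥ (C *ᵥ x) + u ⬝ᵥ (D *ᵥ u) := by
  rw [fromBlocks_mulVec, sumElim_dotProduct_sumElim, Sum.elim_comp_inl, Sum.elim_comp_inr,
    dotProduct_add, dotProduct_add, ← add_assoc]

noncomputable def sectorLyapunovMatrix [DecidableEq k] (A : Matrix m m ℝ) (E : Matrix m k ℝ)
    (C : Matrix k m ℝ) (P : Matrix m m ℝ) : Matrix (m ⊕ k) (m ⊕ k) ℝ :=
  fromBlocks (P - Aᵀ * P * A) (-(Aᵀ * P * E) - (1/2 : ℝ) • Cᵀ)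
    (-(Eᵀ * P * A) - (1/2 : ℝ) • C) (1 - Eᵀ * P * E)

theorem sumElim_dotProduct_sectorLyapunovMatrix_mulVec [DecidableEq k]
    (A : Matrix m m ℝ) (E : Matrix m k ℝ) (C : Matrix k m ℝ) (P : Matrix m m ℝ)
    (x : m → ℝ) (u : k → ℝ) :
    Sum.elim x u ⬝ᵥ (sectorLyapunovMatrix A E C P *ᵥ Sum.elim x u) =
      x ⬝ᵥ (P *ᵥ x) - (A *ᵥ x + E *ᵥ u) ⬝ᵥ (P *ᵥ (A *ᵥ x + E *ᵥ u)) +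
        (u ⬝ᵥ u - u ⬝ᵥ (C *ᵥ x)) := by
  simp only [sectorLyapunovMatrix, sumElim_dotProduct_fromBlocks_mulVec, sub_mulVec, neg_mulVec,
    smul_mulVec, one_mulVec, ← mulVec_mulVec, dotProduct_sub, dotProduct_neg, dotProduct_smul,
    dotProduct_transpose_mulVec, mulVec_add, add_dotProduct, dotProduct_add, smul_eq_mul]
  simp only [dotProduct_comm (P *ᵥ _)]
  ring

theorem dotProduct_sub_dotProduct_nonpos_of_sector {φ : ℝ → ℝ}
    (hφ : ∀ y : ℝ, φ y * (φ y - y) ≤ 0) (y : k → ℝ) :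
    (fun i => φ (y i)) ⬝ᵥ (fun i => φ (y i)) - (fun i => φ (y i)) ⬝ᵥ y ≤ 0 := by
  rw [← dotProduct_sub]
  exact Finset.sum_nonpos fun i _ => hφ (y i)

theorem lyapunov_decrease_of_sectorLyapunovMatrix_posDef [DecidableEq k]
    {A : Matrix m m ℝ} {E : Matrix m k ℝ} {C : Matrix k m ℝ} {P : Matrix m m ℝ}
    (hLMI : (sectorLyapunovMatrix A E C P).PosDef) {φ : ℝ → ℝ}
    (hφ : ∀ y : ℝ, φ y * (φ y - y) ≤ 0) {x : m → ℝ} (hx : x ≠ 0) :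
    (A *ᵥ x + E *ᵥ (fun i => φ ((C *ᵥ x) i))) ⬝ᵥ
        (P *ᵥ (A *ᵥ x + E *ᵥ (fun i => φ ((C *ᵥ x) i)))) < x ⬝ᵥ (P *ᵥ x) := by
  have hxu : Sum.elim x (fun i => φ ((C *ᵥ x) i)) ≠ 0 := fun h =>
    hx (funext fun i => congrFun h (Sum.inl i))
  have hpos := hLMI.dotProduct_mulVec_pos hxu
  rw [star_trivial, sumElim_dotProduct_sectorLyapunovMatrix_mulVec] at hpos
  linarith [dotProduct_sub_dotProduct_nonpos_of_sector hφ (C *ᵥ x)]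

end

theorem lmi_implies_absolute_stability_general {n : ℕ}
    (AK : Matrix (Fin n) (Fin n) ℝ) (E : Matrix (Fin n) (Fin 1) ℝ)
    (C : Matrix (Fin 1) (Fin n) ℝ) (P : Matrix (Fin n) (Fin n) ℝ)
    (hLMI : (fromBlocks (P - AKᵀ * P * AK)
        (-(AKᵀ * P * E) - (1/2 : ℝ) • Cᵀ)
        (-(Eᵀ * P * AK) - (1/2 : ℝ) • C)
        ((1 : Matrix (Fin 1) (Fin 1) ℝ) - Eᵀ * P * E)).PosDef) :
    ∀ φ : ℝ → ℝ, (∀ y : ℝ, φ y * (φ y - y) ≤ 0) →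
      ∀ x : Fin n → ℝ, x ≠ 0 →
        (AK *ᵥ x + E *ᵥ (fun _ => φ ((C *ᵥ x) 0))) ⬝ᵥ
            (P *ᵥ (AK *ᵥ x + E *ᵥ (fun _ => φ ((C *ᵥ x) 0)))) <
          x ⬝ᵥ (P *ᵥ x) := by
  intro φ hφ x hx
  have hu : (fun _ : Fin 1 => φ ((C *ᵥ x) 0)) = fun i => φ ((C *ᵥ x) i) :=
    funext fun i => by rw [Fin.fin_one_eq_zero i]
  rw [hu]
  exact lyapunov_decrease_of_sectorLyapunovMatrix_posDef hLMI hφ hx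

/-- Feasibility of the LMI (19) implies that `V(x) = xᵀPx` certifies absolute
stability of `x(t+1) = A_K x(t) + Eφ(Cx(t))` for all sector-bounded `φ`. -/
theorem lmi_implies_absolute_stability {n : ℕ}
    (AK : Matrix (Fin n) (Fin n) ℝ) (E : Matrix (Fin n) (Fin 1) ℝ)
    (C : Matrix (Fin 1) (Fin n) ℝ) (P : Matrix (Fin n) (Fin n) ℝ)
    (hP : P.PosDef)
    (hLMI : (fromBlocks (P - AKᵀ * P * AK)
        (-(AKᵀ * P * E) - (1/2 : ℝ) • Cᵀ)
        (-(Eᵀ * P * AK) - (1/2 : ℝ) • C)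
        ((1 : Matrix (Fin 1) (Fin 1) ℝ) - Eᵀ * P * E)).PosDef) :
    ∀ φ : ℝ → ℝ, (∀ y : ℝ, φ y * (φ y - y) ≤ 0) →
      ∀ x : Fin n → ℝ, x ≠ 0 →
        (AK *ᵥ x + E *ᵥ (fun _ => φ ((C *ᵥ x) 0))) ⬝ᵥ
            (P *ᵥ (AK *ᵥ x + E *ᵥ (fun _ => φ ((C *ᵥ x) 0)))) <
          x ⬝ᵥ (P *ᵥ x) :=
  lmi_implies_absolute_stability_general AK E C P hLMI
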